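/- arXiv:1711.05916 — 4 statements merged into one kernel-verified Lean document; each statement's English description precedes it below -/
import Mathlib

section
/- Let U ⊆ ℂ be a nonempty connected open set and let f, h : ℂ → ℂ be holomorphic on U (DifferentiableOn ℂ f U and DifferentiableOn ℂ h U). Suppose that ‖deriv f z‖ = ‖deriv h z‖ for every z ∈ U. Then there exist a real number α and a complex number c such that f z = Complex.exp (α * Complex.I) * h z + c for every z ∈ U. -/
/-!
Where `h' ≠ 0`, the quotient `f' / h'` is holomorphic of modulus one, hence locally constant by the
maximum modulus principle; the identity theorem spreads `f' = λ h'` over the connected set `U`, and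
then `f - λ h` has zero derivative there. Writing `λ = exp (i α)` gives the rotation.
-/

open Filter Set Topology

namespace Complex

theorem eventuallyEq_const_mul_of_norm_eq {φ ψ : ℂ → ℂ} {z₀ : ℂ}
    (hφ : ∀ᶠ z in 𝓝 z₀, DifferentiableAt ℂ φ z) (hψ : ∀ᶠ z in 𝓝 z₀, DifferentiableAt ℂ ψ z)
    (hnorm : ∀ᶠ z in 𝓝 z₀, ‖φ z‖ = ‖ψ z‖) (hψ₀ : ψ z₀ ≠ 0) :
    φ =ᶠ[𝓝 z₀] fun z => φ z₀ / ψ z₀ * ψ z := by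
  have hψne : ∀ᶠ z in 𝓝 z₀, ψ z ≠ 0 :=
    (hψ.self_of_nhds.continuousAt).eventually_ne hψ₀
  have hquot_diff : ∀ᶠ z in 𝓝 z₀, DifferentiableAt ℂ (fun z => φ z / ψ z) z := by
    filter_upwards [hφ, hψ, hψne] with z hφz hψz hψz₀ using hφz.div hψz hψz₀
  have hquot_norm : ∀ᶠ z in 𝓝 z₀, ‖φ z / ψ z‖ = 1 := by
    filter_upwards [hnorm, hψne] with z hz hψz
    rw [norm_div, hz, div_self (norm_ne_zero_iff.mpr hψz)]
  have hmax : IsLocalMax (norm ∘ fun z => φ z / ψ z) z₀ := by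
    filter_upwards [hquot_norm] with z hz
    simp only [Function.comp_apply, hz, hquot_norm.self_of_nhds, le_refl]
  filter_upwards [eventually_eq_of_isLocalMax_norm hquot_diff hmax, hψne] with z hz hψz
  rw [← hz, div_mul_cancel₀ _ hψz]

theorem exists_norm_eq_one_eqOn_const_mul_of_norm_eq {φ ψ : ℂ → ℂ} {U : Set ℂ}
    (hU : IsOpen U) (hUc : IsPreconnected U) (hφ : DifferentiableOn ℂ φ U)
    (hψ : DifferentiableOn ℂ ψ U) (hnorm : ∀ z ∈ U, ‖φ z‖ = ‖ψ z‖) :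
    ∃ c : ℂ, ‖c‖ = 1 ∧ EqOn φ (fun z => c * ψ z) U := by
  by_cases hψ0 : ∀ z ∈ U, ψ z = 0
  · refine ⟨1, norm_one, fun z hz => ?_⟩
    have := hnorm z hz
    rw [hψ0 z hz, norm_zero, norm_eq_zero] at this
    simp [this, hψ0 z hz]
  push Not at hψ0
  obtain ⟨z₀, hz₀, hψz₀⟩ := hψ0
  have hU_nhds : ∀ᶠ z in 𝓝 z₀, z ∈ U := hU.mem_nhds hz₀
  have hlocal := eventuallyEq_const_mul_of_norm_eq
    (hU_nhds.mono fun z hz => hφ.differentiableAt (hU.mem_nhds hz))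
    (hU_nhds.mono fun z hz => hψ.differentiableAt (hU.mem_nhds hz))
    (hU_nhds.mono hnorm) hψz₀
  refine ⟨φ z₀ / ψ z₀, ?_, ?_⟩
  · rw [norm_div, hnorm z₀ hz₀, div_self (norm_ne_zero_iff.mpr hψz₀)]
  · exact (hφ.analyticOnNhd hU).eqOn_of_preconnected_of_eventuallyEq
      (analyticOnNhd_const.mul (hψ.analyticOnNhd hU)) hUc hz₀ hlocal

end Complex

theorem holomorphic_eq_deriv_norm_implies_rotation_translation_general
    (U : Set ℂ) (hUopen : IsOpen U) (hUconn : IsConnected U)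
    (f h : ℂ → ℂ) (hf : DifferentiableOn ℂ f U) (hh : DifferentiableOn ℂ h U)
    (hderiv : ∀ z ∈ U, ‖deriv f z‖ = ‖deriv h z‖) :
    ∃ (α : ℝ) (c : ℂ), ∀ z ∈ U,
      f z = Complex.exp (α * Complex.I) * h z + c := by
  obtain ⟨u, hu, hderiv_eq⟩ := Complex.exists_norm_eq_one_eqOn_const_mul_of_norm_eq hUopen
    hUconn.isPreconnected (hf.deriv hUopen) (hh.deriv hUopen) hderiv
  obtain ⟨α, rfl⟩ := (Complex.norm_eq_one_iff u).mp hu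
  have hrotate_deriv : EqOn (deriv f) (deriv fun z => Complex.exp (α * Complex.I) * h z) U :=
    fun z hz => by
      rw [deriv_const_mul _ (hh.differentiableAt (hUopen.mem_nhds hz))]
      exact hderiv_eq hz
  obtain ⟨c, hc⟩ := hUopen.exists_eq_add_of_deriv_eq hUconn.isPreconnected hf
    (hh.const_mul _) hrotate_deriv
  exact ⟨α, c, hc⟩

theorem holomorphic_eq_deriv_norm_implies_rotation_translation
    (U : Set ℂ) (hUne : U.Nonempty) (hUopen : IsOpen U) (hUconn : IsConnected U)
    (f h : ℂ → ℂ) (hf : DifferentiableOn ℂ f U) (hh : DifferentiableOn ℂ h U)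
    (hderiv : ∀ z ∈ U, ‖deriv f z‖ = ‖deriv h z‖) :
    ∃ (α : ℝ) (c : ℂ), ∀ z ∈ U,
      f z = Complex.exp (α * Complex.I) * h z + c :=
  holomorphic_eq_deriv_norm_implies_rotation_translation_general U hUopen hUconn f h hf hh hderiv
end

section
/- Fix τ ∈ ℂ with Im τ ≠ 0 and let Λ = {m + n·τ : m, n ∈ ℤ}. For every p ∈ ℂ there exists a Λ-elliptic function f : ℂ → ℂ such that f is analytic at every point z ∉ p + Λ (i.e. meromorphicOrderAt f z ≥ 0 there, and f is analytic on the complement of p + Λ) and meromorphicOrderAt f z = −2 for every z ∈ p + Λ. (Such an f is given by the Weierstrass ℘-function translated by p.) -/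
/-! The translate `z ↦ ℘(z - p)` of the Weierstrass function of the lattice spanned by `1` and
`τ` works: Mathlib's `℘` is meromorphic, periodic under its lattice, analytic off the lattice and
has a pole of order exactly `2` at each lattice point. -/

-- The order of a meromorphic function at a point, as an element of `ℤ ∪ {∞}`
-- (junk value `0` if the function is not meromorphic at the point).
open Classical in
noncomputable def meromorphicOrderAt' (f : ℂ → ℂ) (x : ℂ) : WithTop ℤ :=
  if h : MeromorphicAt f x then _root_.meromorphicOrderAt f x else 0

/-- The lattice `Λ = {m + n·τ : m, n ∈ ℤ}` generated by `1` and `τ`. -/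
def latticeSet (τ : ℂ) : Set ℂ := {z | ∃ m n : ℤ, z = (m : ℂ) + (n : ℂ) * τ}

/-- A function `h : ℂ → ℂ` is `Λ`-elliptic (for the lattice generated by `1` and `τ`)
if it is meromorphic on all of `ℂ` and doubly periodic with periods `1` and `τ`. -/
def IsElliptic (τ : ℂ) (h : ℂ → ℂ) : Prop :=
  MeromorphicOn h Set.univ ∧ (∀ z, h (z + 1) = h z) ∧ (∀ z, h (z + τ) = h z)

open PeriodPair

theorem Complex.linearIndependent_one_of_im_ne_zero {τ : ℂ} (hτ : τ.im ≠ 0) :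
    LinearIndependent ℝ ![1, τ] := by
  refine LinearIndependent.pair_iff.mpr fun s t h ↦ ?_
  have ht : t = 0 := by
    have him : t * τ.im = 0 := by simpa using congrArg Complex.im h
    exact (mul_eq_zero.mp him).resolve_right hτ
  subst ht
  simpa using congrArg Complex.re h

def PeriodPair.ofOneTau (τ : ℂ) (hτ : τ.im ≠ 0) : PeriodPair where
  ω₁ := 1
  ω₂ := τ
  indep := Complex.linearIndependent_one_of_im_ne_zero hτ

theorem PeriodPair.mem_lattice_ofOneTau {τ : ℂ} (hτ : τ.im ≠ 0) {z : ℂ} :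
    z ∈ (ofOneTau τ hτ).lattice ↔ z ∈ latticeSet τ := by
  simp only [mem_lattice, ofOneTau, mul_one, latticeSet, Set.mem_ofPred_eq, eq_comm]

theorem meromorphicOrderAt'_eq {f : ℂ → ℂ} {x : ℂ} (hf : MeromorphicAt f x) :
    meromorphicOrderAt' f x = meromorphicOrderAt f x :=
  dif_pos hf

/-- For every `p : ℂ` there exists a `Λ`-elliptic function which is analytic away from
`p + Λ` and has a pole of order exactly `2` at every point of `p + Λ`
(e.g. the Weierstrass `℘`-function translated by `p`). -/
theorem exists_elliptic_double_pole (τ : ℂ) (hτ : τ.im ≠ 0) (p : ℂ) :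
    ∃ f : ℂ → ℂ, IsElliptic τ f ∧
      (∀ z : ℂ, z - p ∉ latticeSet τ →
        AnalyticAt ℂ f z ∧ 0 ≤ meromorphicOrderAt' f z) ∧
      (∀ z : ℂ, z - p ∈ latticeSet τ →
        meromorphicOrderAt' f z = ((-2 : ℤ) : WithTop ℤ)) := by
  set L := ofOneTau τ hτ
  have hmer (z : ℂ) : MeromorphicAt (℘[L] ∘ (· - p)) z :=
    meromorphicAt_comp_sub_const_iff_meromorphicAt.mpr (L.meromorphic_weierstrassP _)
  have hper (ω : L.lattice) (z : ℂ) : ℘[L] (z + ω - p) = ℘[L] (z - p) := by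
    rw [add_sub_right_comm, L.weierstrassP_add_coe]
  refine ⟨℘[L] ∘ (· - p),
    ⟨fun z _ ↦ hmer z, hper ⟨1, L.ω₁_mem_lattice⟩, hper ⟨τ, L.ω₂_mem_lattice⟩⟩,
    fun z hz ↦ ?_, fun z hz ↦ ?_⟩
  · have hA : AnalyticAt ℂ (℘[L] ∘ (· - p)) z :=
      .comp (f := (· - p)) (L.analyticOnNhd_weierstrassP _ ((mem_lattice_ofOneTau hτ).not.mpr hz))
        (by fun_prop)
    exact ⟨hA, meromorphicOrderAt'_eq (hmer z) ▸ hA.meromorphicOrderAt_nonneg⟩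
  · rw [meromorphicOrderAt'_eq (hmer z), meromorphicOrderAt_comp_sub_const_eq_meromorphicOrderAt,
      L.order_weierstrassP _ ((mem_lattice_ofOneTau hτ).mpr hz)]
    rfl
end

section
/- Fix τ ∈ ℂ with Im τ ≠ 0, let Λ = {m + n·τ : m, n ∈ ℤ}, and let q ∈ ℂ. There is no Λ-elliptic function h : ℂ → ℂ that is analytic at every point z ∉ q + Λ and satisfies meromorphicOrderAt h z = −1 for every z ∈ q + Λ. In other words, there is no elliptic function whose only singularities modulo Λ are simple poles at a single lattice translate class. -/
/-!
Translate so that `f z = h (z + q)` has its simple poles exactly at `Λ`. The function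
`g z = f z - f (-z)` is again elliptic, has at most simple poles on `Λ` and a genuine one at `0`
(the residues of `f (z)` and `-f (-z)` at `0` are equal, so they add up), and vanishes at the half
periods `1/2` and `τ/2`, because `f (-c/2) = f (c/2)` for every period `c`. In the product
`g z * g (z + 1/2)` each pole of one factor meets a zero of the other, so the product is entire and
elliptic, hence constant by Liouville; it vanishes at `τ/2`, hence near `0`. But its order at `0`
is `-1` plus the order of `g` at `1/2`, which is finite because `g` is not identically zero.
-/

open Filter Topology Function Set

section Lattice

variable {τ : ℂ}

lemma im_eq_of_mem_latticeSet {z : ℂ} (hz : z ∈ latticeSet τ) : ∃ n : ℤ, z.im = n * τ.im := by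
  obtain ⟨m, n, rfl⟩ := hz
  exact ⟨n, by simp⟩

lemma neg_mem_latticeSet {z : ℂ} (hz : z ∈ latticeSet τ) : -z ∈ latticeSet τ := by
  obtain ⟨m, n, rfl⟩ := hz
  exact ⟨-m, -n, by push_cast; ring⟩

lemma sub_mem_latticeSet {z w : ℂ} (hz : z ∈ latticeSet τ) (hw : w ∈ latticeSet τ) :
    z - w ∈ latticeSet τ := by
  obtain ⟨m, n, rfl⟩ := hz
  obtain ⟨m', n', rfl⟩ := hw
  exact ⟨m - m', n - n', by push_cast; ring⟩

lemma Function.Periodic.of_mem_latticeSet {α : Type*} {u : ℂ → α} (h1 : Periodic u 1)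
    (hτ : Periodic u τ) {l : ℂ} (hl : l ∈ latticeSet τ) : Periodic u l := by
  obtain ⟨m, n, rfl⟩ := hl
  simpa using (h1.int_mul m).add_period (hτ.int_mul n)

lemma notMem_latticeSet_of_im_eq_half (hτ : τ.im ≠ 0) {z : ℂ} (hz : z.im = τ.im / 2) :
    z ∉ latticeSet τ := by
  intro hzL
  obtain ⟨n, hn⟩ := im_eq_of_mem_latticeSet hzL
  have h : (2 * n - 1 : ℝ) * τ.im = 0 := by linear_combination 2 * hn.symm + 2 * hz
  have : ((2 * n : ℤ) : ℝ) = 1 := by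
    push_cast
    linarith [(mul_eq_zero.1 h).resolve_right hτ]
  exact absurd (by exact_mod_cast this : 2 * n = 1) (by omega)

lemma half_notMem_latticeSet (hτ : τ.im ≠ 0) : (1 / 2 : ℂ) ∉ latticeSet τ := by
  rintro ⟨m, n, hmn⟩
  have hn : (n : ℝ) * τ.im = 0 := by simpa using (congrArg Complex.im hmn).symm
  obtain rfl : n = 0 := by simpa [hτ] using hn
  have : ((2 * m : ℤ) : ℝ) = 1 := by
    have := congrArg Complex.re hmn
    simp at this
    push_cast
    linarith
  exact absurd (by exact_mod_cast this : 2 * m = 1) (by omega)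

lemma exists_mem_parallelogram_sub_mem_latticeSet (hτ : τ.im ≠ 0) (z : ℂ) :
    ∃ p ∈ Icc (0 : ℝ) 1 ×ˢ Icc (0 : ℝ) 1, z - (p.1 + p.2 * τ) ∈ latticeSet τ := by
  set t := z.im / τ.im
  set s := z.re - t * τ.re
  have hz : z = s + t * τ := by
    apply Complex.ext <;> simp [s, t]
    field_simp
  refine ⟨(Int.fract s, Int.fract t),
    ⟨⟨Int.fract_nonneg s, (Int.fract_lt_one s).le⟩, ⟨Int.fract_nonneg t, (Int.fract_lt_one t).le⟩⟩,
    ⌊s⌋, ⌊t⌋, ?_⟩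
  rw [hz, Int.fract, Int.fract]
  push_cast
  ring

end Lattice

lemma Function.Periodic.apply_neg_half_period {K α : Type*} [DivisionRing K] [NeZero (2 : K)]
    {f : K → α} {c : K} (hf : Periodic f c) : f (-(c / 2)) = f (c / 2) := by
  rw [← hf.sub_eq', sub_half]

lemma Function.Periodic.sub_comp_neg {α β : Type*} [AddCommGroup α] [AddGroup β] {f : α → β}
    {c : α} (hf : Periodic f c) : Periodic (fun z => f z - f (-z)) c := by
  intro z
  simp only [hf z, neg_add, hf.neg (-z)]

lemma Function.Periodic.of_eventuallyEq_nhdsNE {𝕜 E : Type*} [NontriviallyNormedField 𝕜]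
    [TopologicalSpace E] [T2Space E] {P Q : 𝕜 → E} {c : 𝕜} (hP : Periodic P c)
    (hQ : Continuous Q) (hQP : ∀ z, Q =ᶠ[𝓝[≠] z] P) : Periodic Q c := by
  intro z
  have hshift : (fun w => Q (w + c)) =ᶠ[𝓝[≠] z] P := by
    have := (hQP (z + c)).filter_mono (Filter.map_add_right_nhdsNE (c := c) (a := z)).le
    filter_upwards [Filter.eventually_map.1 this] with w hw
    rw [hw, hP]
  exact ((hQ.comp (continuous_add_const c)).continuousAt.eventuallyEq_nhds_iff_eventuallyEq_nhdsNE
    hQ.continuousAt).1 (hshift.trans (hQP z).symm) |>.eq_of_nhds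

section Liouville

variable {τ : ℂ}

theorem Differentiable.apply_eq_apply_of_periodic {u : ℂ → ℂ} (hτ : τ.im ≠ 0)
    (hu : Differentiable ℂ u) (h1 : Periodic u 1) (hτu : Periodic u τ) (z w : ℂ) :
    u z = u w := by
  set K := (fun p : ℝ × ℝ => (p.1 : ℂ) + p.2 * τ) '' (Icc 0 1 ×ˢ Icc 0 1)
  have hK : IsCompact K := (isCompact_Icc.prod isCompact_Icc).image (by fun_prop)
  have hrange : range u ⊆ u '' K := by
    rintro _ ⟨z, rfl⟩
    obtain ⟨p, hp, hz⟩ := exists_mem_parallelogram_sub_mem_latticeSet hτ z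
    exact ⟨_, mem_image_of_mem _ hp,
      by simpa using (h1.of_mem_latticeSet hτu hz (p.1 + p.2 * τ)).symm⟩
  exact hu.apply_eq_apply_of_bounded ((hK.image hu.continuous).isBounded.subset hrange) z w

theorem MeromorphicOn.eventuallyEq_nhdsNE_const_of_periodic {P : ℂ → ℂ} (hτ : τ.im ≠ 0)
    (hP : MeromorphicOn P univ) (hord : ∀ z, 0 ≤ meromorphicOrderAt P z) (h1 : Periodic P 1)
    (hτP : Periodic P τ) {z₀ : ℂ} (hz₀ : AnalyticAt ℂ P z₀) (z : ℂ) :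
    P =ᶠ[𝓝[≠] z] fun _ => P z₀ := by
  set Q := toMeromorphicNFOn P univ
  have hQP : ∀ z, Q =ᶠ[𝓝[≠] z] P := fun z => hP.toMeromorphicNFOn_eq_self_on_nhdsNE (mem_univ z)
  have hQ : Differentiable ℂ Q := fun z =>
    (meromorphicNFOn_toMeromorphicNFOn P univ (mem_univ z)
      |>.meromorphicOrderAt_nonneg_iff_analyticAt.1
      (by rw [meromorphicOrderAt_toMeromorphicNFOn hP (mem_univ z)]; exact hord z)).differentiableAt
  have hQz₀ : Q z₀ = P z₀ :=
    (hQ.continuous.continuousAt.eventuallyEq_nhds_iff_eventuallyEq_nhdsNE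
      hz₀.continuousAt).1 (hQP z₀) |>.eq_of_nhds
  filter_upwards [hQP z] with w hw
  rw [← hw, ← hQz₀]
  exact hQ.apply_eq_apply_of_periodic hτ (h1.of_eventuallyEq_nhdsNE hQ.continuous hQP)
    (hτP.of_eventuallyEq_nhdsNE hQ.continuous hQP) w z₀

end Liouville

section Order

variable {𝕜 : Type*} [NontriviallyNormedField 𝕜]

lemma meromorphicOrderAt_mul_nonneg_of_apply_eq_zero {a b : 𝕜 → 𝕜} {x : 𝕜}
    (ha : MeromorphicAt a x) (hao : -1 ≤ meromorphicOrderAt a x) (hb : AnalyticAt 𝕜 b x)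
    (hbx : b x = 0) : 0 ≤ meromorphicOrderAt (a * b) x := by
  have hbo : 0 < meromorphicOrderAt b x :=
    (tendsto_zero_iff_meromorphicOrderAt_pos hb.meromorphicAt).1
      (hbx ▸ hb.continuousAt.tendsto.mono_left nhdsWithin_le_nhds)
  rw [meromorphicOrderAt_mul ha hb.meromorphicAt]
  generalize meromorphicOrderAt a x = m at hao
  generalize meromorphicOrderAt b x = n at hbo
  induction m <;> induction n <;> simp_all
  norm_cast at *
  have : (-1 : ℤ) ≤ _ := WithTop.coe_le_coe.1 hao
  omega

lemma le_meromorphicOrderAt_sub_comp_neg [CompleteSpace 𝕜] [CharZero 𝕜] {E : Type*}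
    [NormedAddCommGroup E] [NormedSpace 𝕜 E] {f : 𝕜 → E} {x : 𝕜} {n : WithTop ℤ}
    (hf : MeromorphicAt f x) (hf' : MeromorphicAt f (-x)) (hn : n ≤ meromorphicOrderAt f x)
    (hn' : n ≤ meromorphicOrderAt f (-x)) :
    n ≤ meromorphicOrderAt (fun z => f z - f (-z)) x := by
  have hneg : meromorphicOrderAt (fun z => f (-z)) x = meromorphicOrderAt f (-x) :=
    meromorphicOrderAt_comp_of_deriv_ne_zero (g := Neg.neg) analyticAt_id.neg (by simp)
  have hf'' : MeromorphicAt (fun z => f (-z)) x := hf'.comp_analyticAt analyticAt_id.neg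
  have hsub : (fun z => f z - f (-z)) = f + -fun z => f (-z) := by
    ext z
    simp [sub_eq_add_neg]
  calc n ≤ min (meromorphicOrderAt f x) (meromorphicOrderAt (-fun z => f (-z)) x) := by
        rw [← meromorphicOrderAt_neg, hneg]; exact le_min hn hn'
    _ ≤ _ := hsub ▸ meromorphicOrderAt_add hf hf''.neg

lemma meromorphicOrderAt_sub_comp_neg_of_eq_neg_one [CharZero 𝕜] {E : Type*}
    [NormedAddCommGroup E] [NormedSpace 𝕜 E] {f : 𝕜 → E} (hf : meromorphicOrderAt f 0 = -1) :
    meromorphicOrderAt (fun z => f z - f (-z)) 0 = -1 := by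
  have hm : MeromorphicAt f 0 := meromorphicAt_of_meromorphicOrderAt_ne_zero (by simp [hf])
  obtain ⟨v, hv, hv0, hfv⟩ := (meromorphicOrderAt_eq_int_iff hm).1 hf
  have hneg : Tendsto Neg.neg (𝓝[≠] (0 : 𝕜)) (𝓝[≠] 0) := by
    have := Filter.neg_nhdsNE (a := (0 : 𝕜))
    rw [neg_zero] at this
    exact this.le
  refine (meromorphicOrderAt_eq_int_iff ?_).2 ⟨fun z => v z + v (-z), ?_, ?_, ?_⟩
  · exact hm.sub (by simpa using (neg_zero (G := 𝕜) ▸ hm).comp_analyticAt analyticAt_id.neg)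
  · exact hv.add (by simpa using (neg_zero (G := 𝕜) ▸ hv).comp analyticAt_id.neg)
  · simpa [← two_smul 𝕜] using hv0
  · filter_upwards [hfv, hneg.eventually hfv] with z h1 h2
    simp only [h1, h2, sub_zero, zpow_neg_one, inv_neg, neg_smul, smul_add]
    abel

end Order

section SimplePoles

variable {τ : ℂ}

theorem meromorphicOrderAt_eq_top_of_periodic_of_half_periods (hτ : τ.im ≠ 0) {g : ℂ → ℂ}
    (hg : MeromorphicOn g univ) (h1 : Periodic g 1) (hτg : Periodic g τ)
    (hga : ∀ z ∉ latticeSet τ, AnalyticAt ℂ g z)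
    (hgo : ∀ z ∈ latticeSet τ, -1 ≤ meromorphicOrderAt g z)
    (hg_half : g (1 / 2) = 0) (hg_τhalf : g (τ / 2) = 0) :
    meromorphicOrderAt g 0 = ⊤ := by
  set g' : ℂ → ℂ := fun z => g (z + 1 / 2)
  have hg' : MeromorphicOn g' univ := fun z _ => (hg _ trivial).comp_analyticAt (by fun_prop)
  have hg'o : ∀ z, meromorphicOrderAt g' z = meromorphicOrderAt g (z + 1 / 2) := fun z =>
    meromorphicOrderAt_fun_comp_add_const_eq_meromorphicOrderAt
  have hg'a : ∀ z, z + 1 / 2 ∉ latticeSet τ → AnalyticAt ℂ g' z := fun z hz =>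
    AnalyticAt.comp (g := g) (f := (· + 1 / 2)) (hga _ hz) (by fun_prop)
  have hzero : ∀ z, z - 1 / 2 ∈ latticeSet τ → g z = 0 := fun z hz => by
    rw [← hg_half, ← h1.of_mem_latticeSet hτg hz (1 / 2), add_sub_cancel]
  have hPo : ∀ z, 0 ≤ meromorphicOrderAt (g * g') z := by
    intro z
    by_cases hz : z ∈ latticeSet τ
    · have hz' : z + 1 / 2 ∉ latticeSet τ := fun h =>
        half_notMem_latticeSet hτ (by simpa using sub_mem_latticeSet h hz)
      exact meromorphicOrderAt_mul_nonneg_of_apply_eq_zero (hg z trivial) (hgo z hz)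
        (hg'a z hz') (hzero _ (by simpa using hz))
    by_cases hz' : z + 1 / 2 ∈ latticeSet τ
    · have hz'' : z - 1 / 2 ∈ latticeSet τ := by
        convert sub_mem_latticeSet hz' (⟨1, 0, by simp⟩ : (1 : ℂ) ∈ latticeSet τ) using 1
        ring
      rw [mul_comm]
      exact meromorphicOrderAt_mul_nonneg_of_apply_eq_zero (hg' z trivial) (hg'o z ▸ hgo _ hz')
        (hga z hz) (hzero z hz'')
    · exact ((hga z hz).mul (hg'a z hz')).meromorphicOrderAt_nonneg
  have hPa : AnalyticAt ℂ (g * g') (τ / 2) :=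
    (hga _ (notMem_latticeSet_of_im_eq_half hτ (by simp))).mul
      (hg'a _ (notMem_latticeSet_of_im_eq_half hτ (by simp)))
  have hP0 : g * g' =ᶠ[𝓝[≠] 0] 0 := by
    simpa [hg_τhalf, Pi.zero_def] using (hg.mul hg').eventuallyEq_nhdsNE_const_of_periodic hτ hPo
      (h1.mul (h1.add_const _)) (hτg.mul (hτg.add_const _)) hPa 0
  have hsum : meromorphicOrderAt g 0 + meromorphicOrderAt g (1 / 2) = ⊤ := by
    rw [← meromorphicOrderAt_eq_top_iff.2 hP0, meromorphicOrderAt_mul (hg 0 trivial)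
      (hg' 0 trivial), hg'o, zero_add]
  by_contra h0
  exact WithTop.add_ne_top.2 ⟨h0, hg.meromorphicOrderAt_ne_top_of_isPreconnected
    isPreconnected_univ trivial trivial h0⟩ hsum

theorem not_forall_meromorphicOrderAt_eq_neg_one_of_periodic (hτ : τ.im ≠ 0) {f : ℂ → ℂ}
    (hf : MeromorphicOn f univ) (h1 : Periodic f 1) (hτf : Periodic f τ)
    (hfa : ∀ z ∉ latticeSet τ, AnalyticAt ℂ f z) :
    ¬ ∀ z ∈ latticeSet τ, meromorphicOrderAt f z = -1 := by
  intro hfo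
  set g : ℂ → ℂ := fun z => f z - f (-z)
  have hg : MeromorphicOn g univ := fun z _ =>
    (hf z trivial).sub ((hf (-z) trivial).comp_analyticAt analyticAt_id.neg)
  have hga : ∀ z ∉ latticeSet τ, AnalyticAt ℂ g z := fun z hz =>
    (hfa z hz).sub (AnalyticAt.comp (g := f) (f := Neg.neg)
      (hfa (-z) fun h => hz (by simpa using neg_mem_latticeSet h)) analyticAt_id.neg)
  have hgo : ∀ z ∈ latticeSet τ, -1 ≤ meromorphicOrderAt g z := fun z hz =>
    le_meromorphicOrderAt_sub_comp_neg (hf z trivial) (hf (-z) trivial) (hfo z hz).ge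
      (hfo _ (neg_mem_latticeSet hz)).ge
  have hg0 : meromorphicOrderAt g 0 = -1 :=
    meromorphicOrderAt_sub_comp_neg_of_eq_neg_one (hfo 0 ⟨0, 0, by simp⟩)
  have := meromorphicOrderAt_eq_top_of_periodic_of_half_periods hτ hg h1.sub_comp_neg
    hτf.sub_comp_neg hga hgo (by simpa [g] using sub_eq_zero.2 h1.apply_neg_half_period.symm)
    (sub_eq_zero.2 hτf.apply_neg_half_period.symm)
  simp [hg0] at this

end SimplePoles

/-- There is no elliptic function whose only singularities modulo `Λ` are simple poles
at a single lattice translate class `q + Λ`. -/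
theorem no_elliptic_single_simple_pole (τ : ℂ) (hτ : τ.im ≠ 0) (q : ℂ) :
    ¬ ∃ h : ℂ → ℂ, IsElliptic τ h ∧
      (∀ z : ℂ, z - q ∉ latticeSet τ → AnalyticAt ℂ h z) ∧
      (∀ z : ℂ, z - q ∈ latticeSet τ →
        meromorphicOrderAt' h z = ((-1 : ℤ) : WithTop ℤ)) := by
  rintro ⟨h, ⟨hmero, h1, hτh⟩, hana, hord⟩
  refine not_forall_meromorphicOrderAt_eq_neg_one_of_periodic hτ (f := fun z => h (z + q))
    (fun z _ => (hmero _ trivial).comp_analyticAt (by fun_prop))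
    (Periodic.add_const h1 q) (Periodic.add_const hτh q)
    (fun z hz => AnalyticAt.comp (g := h) (f := (· + q)) (hana _ (by simpa using hz)) (by fun_prop))
    fun z hz => ?_
  have hz' := hord (z + q) (by simpa using hz)
  rw [meromorphicOrderAt', dif_pos (hmero _ trivial)] at hz'
  rw [meromorphicOrderAt_fun_comp_add_const_eq_meromorphicOrderAt, hz']
  rfl
end

section
/- Let U, V ⊆ ℂ be open sets, let K ≥ 1, and let f : ℂ → ℂ be continuously differentiable on U (ContDiffOn ℝ 1 f U), injective on U, with f '' U = V, and suppose that for every z ∈ U the real-linear derivative D f_z = fderiv ℝ f z satisfies ‖D f_z‖² ≤ K · det(D f_z), where ‖·‖ is the operator norm and det is the determinant of D f_z viewed as a linear map of the real plane. Then for every function u : ℂ → ℝ that is continuously differentiable on V one has ∫_U ‖fderiv ℝ (u ∘ f) z‖² dz ≤ K · ∫_V ‖fderiv ℝ u w‖² dw, where both integrals are with respect to Lebesgue measure. -/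
/-!
With `M = Df z` and `L = Du (f z)`, the chain rule gives `D(u ∘ f) z = L ∘ M`, and the change of
variables `w = f z` turns the energy of `u` on `V` into `∫_U det M · ‖L‖²`. Pointwise,
`‖L ∘ M‖² ≤ ‖L‖² ‖M‖² ≤ K det M ‖L‖²`, which integrates to the claim whenever the energy of `u` is
finite. When it is infinite its Bochner integral is `0`, so the energy of `u ∘ f` must be infinite
as well; this follows from the reverse bound `det M ‖L‖² ≤ K ‖L ∘ M‖²`. For that, write
`M z = a z + b z̄`: the adjugate `A w = ā w - b w̄` satisfies `M ∘ A = det M` and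
`‖A‖ ≤ |a| + |b| = ‖M‖`, hence `‖L‖ det M ≤ ‖L ∘ M‖ ‖M‖`, and `‖M‖² ≤ K det M` finishes.
-/

open Complex ComplexConjugate MeasureTheory

namespace ContinuousLinearMap

theorem exists_apply_eq_mul_add_mul_conj (M : ℂ →L[ℝ] ℂ) :
    ∃ a b : ℂ, ∀ z, M z = a * z + b * conj z := by
  refine ⟨(M 1 - I * M I) / 2, (M 1 + I * M I) / 2, fun z => ?_⟩
  have hz : z = z.re • (1 : ℂ) + z.im • I := by simp [Complex.real_smul, Complex.re_add_im]
  conv_lhs => rw [hz, map_add, map_smul, map_smul]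
  apply Complex.ext <;> simp [Complex.real_smul, Complex.mul_re, Complex.mul_im] <;> ring

variable {M : ℂ →L[ℝ] ℂ} {a b : ℂ}

theorem det_eq_normSq_sub_normSq (hM : ∀ z, M z = a * z + b * conj z) :
    M.det = normSq a - normSq b := by
  rw [ContinuousLinearMap.det, ← LinearMap.det_toMatrix Complex.basisOneI, Matrix.det_fin_two]
  simp [LinearMap.toMatrix_apply, hM, Complex.normSq_apply]
  ring

theorem norm_add_norm_le_opNorm (hM : ∀ z, M z = a * z + b * conj z) :
    ‖a‖ + ‖b‖ ≤ ‖M‖ := by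
  obtain ⟨z, hz⟩ := IsAlgClosed.exists_pow_nat_eq (conj a * b) two_pos
  rcases eq_or_ne z 0 with rfl | hz0
  · have hab : a = 0 ∨ b = 0 := by simpa using hz.symm
    calc ‖a‖ + ‖b‖ = ‖M 1‖ := by rcases hab with rfl | rfl <;> simp [hM]
      _ ≤ ‖M‖ := by simpa using M.le_opNorm 1
  -- `z ^ 2 = conj a * b` aligns the two terms of `M z`
  have hnz : ‖z‖ ^ 2 = ‖a‖ * ‖b‖ := by rw [← norm_pow, hz]; simp
  have hMz : conj z * M z = a * (‖b‖ * (‖a‖ + ‖b‖) : ℝ) := by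
    have : conj z ^ 2 = a * conj b := by rw [← map_pow, hz]; simp
    calc conj z * M z = a * (conj z * z) + b * conj z ^ 2 := by rw [hM]; ring
      _ = _ := by
        rw [this, conj_mul', ← Complex.ofReal_pow, hnz, mul_left_comm, mul_conj']
        push_cast; ring
  have hnorm : ‖z‖ * ‖M z‖ = ‖z‖ * (‖z‖ * (‖a‖ + ‖b‖)) := by
    calc ‖z‖ * ‖M z‖ = ‖conj z * M z‖ := by rw [norm_mul, norm_conj]
      _ = _ := by
        rw [hMz, norm_mul, norm_real, Real.norm_of_nonneg (by positivity)]
        linear_combination (‖a‖ + ‖b‖) * hnz.symm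
  have hz' : 0 < ‖z‖ := norm_pos_iff.2 hz0
  have := M.le_opNorm z
  rw [mul_left_cancel₀ hz'.ne' hnorm, mul_comm] at this
  exact le_of_mul_le_mul_right this hz'

theorem exists_comp_eq_det_smul_id_and_opNorm_le (M : ℂ →L[ℝ] ℂ) :
    ∃ A : ℂ →L[ℝ] ℂ, M.comp A = M.det • ContinuousLinearMap.id ℝ ℂ ∧ ‖A‖ ≤ ‖M‖ := by
  obtain ⟨a, b, hM⟩ := exists_apply_eq_mul_add_mul_conj M
  refine ⟨conj a • ContinuousLinearMap.id ℝ ℂ - b • (conjCLE : ℂ →L[ℝ] ℂ), ?_, ?_⟩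
  · refine ContinuousLinearMap.ext fun w => ?_
    simp only [comp_apply, sub_apply, smul_apply, id_apply, ContinuousLinearEquiv.coe_coe,
      Complex.conjCLE_apply, smul_eq_mul, hM, det_eq_normSq_sub_normSq hM, Complex.real_smul,
      map_sub, map_mul, conj_conj]
    push_cast
    rw [← mul_conj, ← mul_conj]
    ring
  · refine opNorm_le_bound _ (norm_nonneg _) fun w => ?_
    calc ‖conj a * w - b * conj w‖ ≤ (‖a‖ + ‖b‖) * ‖w‖ := by
          refine (norm_sub_le _ _).trans_eq ?_
          simp only [norm_mul, norm_conj]; ring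
      _ ≤ ‖M‖ * ‖w‖ := by gcongr; exact norm_add_norm_le_opNorm hM

variable {F : Type*} [NormedAddCommGroup F] [NormedSpace ℝ F]

theorem norm_mul_abs_det_le (M : ℂ →L[ℝ] ℂ) (L : ℂ →L[ℝ] F) :
    ‖L‖ * |M.det| ≤ ‖L.comp M‖ * ‖M‖ := by
  obtain ⟨A, hMA, hA⟩ := exists_comp_eq_det_smul_id_and_opNorm_le M
  calc ‖L‖ * |M.det| = ‖(L.comp M).comp A‖ := by
        rw [comp_assoc, hMA, comp_smul, comp_id, norm_smul, Real.norm_eq_abs, mul_comm]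
    _ ≤ ‖L.comp M‖ * ‖A‖ := opNorm_comp_le _ _
    _ ≤ ‖L.comp M‖ * ‖M‖ := by gcongr

section Quasiconformal

variable {E : Type*} [NormedAddCommGroup E] [NormedSpace ℝ E] {K : ℝ}

theorem det_nonneg_of_sq_norm_le_mul_det {M : E →L[ℝ] E} (hK : 0 < K)
    (hM : ‖M‖ ^ 2 ≤ K * M.det) : 0 ≤ M.det :=
  nonneg_of_mul_nonneg_right ((sq_nonneg _).trans hM) hK

theorem sq_norm_comp_le_mul_det {M : E →L[ℝ] E} (L : E →L[ℝ] F)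
    (hM : ‖M‖ ^ 2 ≤ K * M.det) : ‖L.comp M‖ ^ 2 ≤ K * (M.det * ‖L‖ ^ 2) :=
  calc ‖L.comp M‖ ^ 2 ≤ (‖L‖ * ‖M‖) ^ 2 := by gcongr; exact opNorm_comp_le L M
    _ = ‖L‖ ^ 2 * ‖M‖ ^ 2 := mul_pow _ _ _
    _ ≤ ‖L‖ ^ 2 * (K * M.det) := by gcongr
    _ = K * (M.det * ‖L‖ ^ 2) := by ring

theorem det_mul_sq_norm_le_mul_sq_norm_comp {M : ℂ →L[ℝ] ℂ} (L : ℂ →L[ℝ] F) (hK : 0 < K)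
    (hM : ‖M‖ ^ 2 ≤ K * M.det) : M.det * ‖L‖ ^ 2 ≤ K * ‖L.comp M‖ ^ 2 := by
  have hdet := det_nonneg_of_sq_norm_le_mul_det hK hM
  have hadj := norm_mul_abs_det_le M L
  rw [abs_of_nonneg hdet] at hadj
  rcases hdet.eq_or_lt with hzero | hpos
  · rw [← hzero, zero_mul]; positivity
  refine le_of_mul_le_mul_left ?_ hpos
  calc M.det * (M.det * ‖L‖ ^ 2) = (‖L‖ * M.det) ^ 2 := by ring
    _ ≤ (‖L.comp M‖ * ‖M‖) ^ 2 := by gcongr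
    _ = ‖L.comp M‖ ^ 2 * ‖M‖ ^ 2 := mul_pow _ _ _
    _ ≤ ‖L.comp M‖ ^ 2 * (K * M.det) := by gcongr
    _ = M.det * (K * ‖L.comp M‖ ^ 2) := by ring

end Quasiconformal

end ContinuousLinearMap

namespace MeasureTheory

section ChangeOfVariables

variable {E : Type*} [NormedAddCommGroup E] [NormedSpace ℝ E] [FiniteDimensional ℝ E]
  [MeasurableSpace E] [BorelSpace E] (μ : Measure E) [μ.IsAddHaarMeasure]
  {s : Set E} {f : E → E} {f' : E → E →L[ℝ] E} {g h : E → ℝ} {c : ℝ}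

theorem lintegral_le_ofReal_mul_lintegral_image (hs : MeasurableSet s)
    (hf' : ∀ x ∈ s, HasFDerivWithinAt f (f' x) s x) (hf : Set.InjOn f s) (hc : 0 ≤ c)
    (hle : ∀ x ∈ s, h x ≤ c * (|(f' x).det| * g (f x))) :
    ∫⁻ x in s, ENNReal.ofReal (h x) ∂μ
      ≤ ENNReal.ofReal c * ∫⁻ y in f '' s, ENNReal.ofReal (g y) ∂μ := by
  rw [lintegral_image_eq_lintegral_abs_det_fderiv_mul μ hs hf' hf,
    ← lintegral_const_mul' _ _ ENNReal.ofReal_ne_top]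
  refine setLIntegral_mono' hs fun x hx => ?_
  rw [← ENNReal.ofReal_mul (abs_nonneg _), ← ENNReal.ofReal_mul hc]
  exact ENNReal.ofReal_le_ofReal (hle x hx)

theorem lintegral_image_le_ofReal_mul_lintegral (hs : MeasurableSet s)
    (hf' : ∀ x ∈ s, HasFDerivWithinAt f (f' x) s x) (hf : Set.InjOn f s) (hc : 0 ≤ c)
    (hle : ∀ x ∈ s, |(f' x).det| * g (f x) ≤ c * h x) :
    ∫⁻ y in f '' s, ENNReal.ofReal (g y) ∂μ
      ≤ ENNReal.ofReal c * ∫⁻ x in s, ENNReal.ofReal (h x) ∂μ := by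
  rw [lintegral_image_eq_lintegral_abs_det_fderiv_mul μ hs hf' hf,
    ← lintegral_const_mul' _ _ ENNReal.ofReal_ne_top]
  refine setLIntegral_mono' hs fun x hx => ?_
  rw [← ENNReal.ofReal_mul (abs_nonneg _), ← ENNReal.ofReal_mul hc]
  exact ENNReal.ofReal_le_ofReal (hle x hx)

end ChangeOfVariables

theorem integral_le_mul_integral_of_lintegral_le {α β : Type*} [MeasurableSpace α]
    [MeasurableSpace β] {μ : Measure α} {ν : Measure β} {F : α → ℝ} {G : β → ℝ} {K : ℝ}
    (hK : 0 ≤ K) (hF : 0 ≤ᵐ[μ] F) (hG : 0 ≤ᵐ[ν] G)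
    (hFm : AEStronglyMeasurable F μ) (hGm : AEStronglyMeasurable G ν)
    (hFG : ∫⁻ x, ENNReal.ofReal (F x) ∂μ ≤ ENNReal.ofReal K * ∫⁻ y, ENNReal.ofReal (G y) ∂ν)
    (hGF : ∫⁻ y, ENNReal.ofReal (G y) ∂ν ≤ ENNReal.ofReal K * ∫⁻ x, ENNReal.ofReal (F x) ∂μ) :
    ∫ x, F x ∂μ ≤ K * ∫ y, G y ∂ν := by
  rw [integral_eq_lintegral_of_nonneg_ae hF hFm, integral_eq_lintegral_of_nonneg_ae hG hGm]
  by_cases htop : ∫⁻ y, ENNReal.ofReal (G y) ∂ν = ⊤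
  · rw [htop, top_le_iff, ENNReal.mul_eq_top] at hGF
    simp_all
  calc (∫⁻ x, ENNReal.ofReal (F x) ∂μ).toReal
      ≤ (ENNReal.ofReal K * ∫⁻ y, ENNReal.ofReal (G y) ∂ν).toReal :=
        ENNReal.toReal_mono (ENNReal.mul_ne_top ENNReal.ofReal_ne_top htop) hFG
    _ = K * (∫⁻ y, ENNReal.ofReal (G y) ∂ν).toReal := by
        rw [ENNReal.toReal_mul, ENNReal.toReal_ofReal hK]

end MeasureTheory

open ContinuousLinearMap

/-- Quasi-invariance of the Dirichlet energy under a `K`-quasiconformal map: if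
`f : U → V` is a `C¹` bijection with `‖Df_z‖² ≤ K · det (Df_z)` everywhere on `U`, then
for every `C¹` function `u` on `V` the Dirichlet energy of `u ∘ f` on `U` is at most `K`
times the Dirichlet energy of `u` on `V`. -/
theorem dirichlet_energy_quasiconformal (U V : Set ℂ) (hU : IsOpen U) (hV : IsOpen V)
    (K : ℝ) (hK : 1 ≤ K) (f : ℂ → ℂ)
    (hf : ContDiffOn ℝ 1 f U) (hinj : Set.InjOn f U) (himg : f '' U = V)
    (hqc : ∀ z ∈ U, ‖fderiv ℝ f z‖ ^ 2 ≤ K * LinearMap.det (fderiv ℝ f z : ℂ →ₗ[ℝ] ℂ))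
    (u : ℂ → ℝ) (hu : ContDiffOn ℝ 1 u V) :
    ∫ z in U, ‖fderiv ℝ (u ∘ f) z‖ ^ 2 ≤ K * ∫ w in V, ‖fderiv ℝ u w‖ ^ 2 := by
  have hK0 : 0 < K := by linarith
  have hfd : ∀ z ∈ U, DifferentiableAt ℝ f z := fun z hz =>
    (hf.differentiableOn one_ne_zero).differentiableAt (hU.mem_nhds hz)
  have hchain : ∀ z ∈ U, fderiv ℝ (u ∘ f) z = (fderiv ℝ u (f z)).comp (fderiv ℝ f z) :=
    fun z hz => fderiv_comp z ((hu.differentiableOn one_ne_zero).differentiableAt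
      (hV.mem_nhds (himg ▸ Set.mem_image_of_mem f hz))) (hfd z hz)
  have hdet : ∀ z ∈ U, |(fderiv ℝ f z).det| = (fderiv ℝ f z).det := fun z hz =>
    abs_of_nonneg (det_nonneg_of_sq_norm_le_mul_det hK0 (hqc z hz))
  have hf' : ∀ z ∈ U, HasFDerivWithinAt f (fderiv ℝ f z) U z := fun z hz =>
    (hfd z hz).hasFDerivAt.hasFDerivWithinAt
  have henergy (v : ℂ → ℝ) (μ : Measure ℂ) :
      AEStronglyMeasurable (fun z => ‖fderiv ℝ v z‖ ^ 2) μ :=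
    ((measurable_fderiv ℝ v).norm.pow_const 2).aestronglyMeasurable
  subst himg
  refine integral_le_mul_integral_of_lintegral_le hK0.le (.of_forall fun _ => sq_nonneg _)
    (.of_forall fun _ => sq_nonneg _) (henergy _ _) (henergy _ _) ?_ ?_
  · refine lintegral_le_ofReal_mul_lintegral_image volume hU.measurableSet hf' hinj hK0.le
      fun z hz => ?_
    rw [hchain z hz, hdet z hz]
    exact sq_norm_comp_le_mul_det _ (hqc z hz)
  · refine lintegral_image_le_ofReal_mul_lintegral volume hU.measurableSet hf' hinj hK0.le
      fun z hz => ?_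
    rw [hchain z hz, hdet z hz]
    exact det_mul_sq_norm_le_mul_sq_norm_comp _ hK0 (hqc z hz)
end
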